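/- Let $u$ be a nonconstant inner function and $\varphi \in L^\infty(\mathbb{T})$ with $\|\varphi\|_\infty = 1$. Suppose there exist inner functions $\psi_+$ and $\chi_+$ such that $\varphi = \bar u\, \bar\psi_+\, \chi_+$ a.e. on $\mathbb{T}$. Then there exists a nonzero $h_0 \in H^2$ such that $f_0 = u h_0 \in uH^2 \subset \mathcal{K}_u^\perp$ satisfies $\|D_\varphi f_0\| = \|f_0\|$ and $\varphi u h_0 \in H^2$; i.e., $D_\varphi$ attains its norm on the analytic component. -/

import Mathlib

set_option synthInstance.maxHeartbeats 1000000
set_option maxHeartbeats 1000000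

open MeasureTheory Complex Submodule

noncomputable section
namespace DTTO

instance fact2pi : Fact (0 < 2 * Real.pi) := ⟨by positivity⟩

/-- The unit circle, realized as `ℝ / 2πℤ`. -/
abbrev 𝕋 : Type := AddCircle (2 * Real.pi)

/-- Normalized Haar (arc-length) measure on the circle. -/
abbrev μ : Measure 𝕋 := AddCircle.haarAddCircle

/-- The Hilbert space `L²(𝕋)`. -/
abbrev L2 : Type := Lp ℂ 2 μ

/-- The Hardy space `H²`: the closed span in `L²` of the Fourier monomials `e^{int}`, `n ≥ 0`. -/
def H2 : Submodule ℂ L2 :=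
  (span ℂ (Set.range fun n : ℕ => fourierLp 2 (n : ℤ))).topologicalClosure

instance : CompleteSpace H2 :=
  IsClosed.completeSpace_coe (hs := Submodule.isClosed_topologicalClosure _)

/-- A boundary function is inner iff it is unimodular a.e. and its `L²` class lies in `H²`. -/
def IsInner (w : 𝕋 → ℂ) : Prop :=
  ∃ hw : MemLp w 2 μ, hw.toLp w ∈ H2 ∧ ∀ᵐ x ∂μ, ‖w x‖ = 1

/-- `w` is a nonconstant function (up to null sets). -/
def Nonconst (w : 𝕋 → ℂ) : Prop := ¬ ∃ c : ℂ, w =ᵐ[μ] fun _ => c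

/-- `M` is the operator of multiplication by `φ` on `L²`. -/
def IsMul (φ : 𝕋 → ℂ) (M : L2 →L[ℂ] L2) : Prop :=
  ∀ f : L2, (M f : 𝕋 → ℂ) =ᵐ[μ] fun x => φ x * f x

/-- The subspace `u·H²` (where `Mu` is multiplication by `u`). -/
def uH2 (Mu : L2 →L[ℂ] L2) : Submodule ℂ L2 := H2.map (Mu : L2 →ₗ[ℂ] L2)

/-- The model space `K_u = H² ⊖ uH²`. -/
def Ku (Mu : L2 →L[ℂ] L2) : Submodule ℂ L2 := H2 ⊓ (uH2 Mu)ᗮ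

instance (Mu : L2 →L[ℂ] L2) : CompleteSpace (Ku Mu) :=
  IsClosed.completeSpace_coe (hs := by
    have : (↑(Ku Mu) : Set L2) = ↑H2 ∩ ↑(uH2 Mu)ᗮ := rfl
    rw [this]
    exact (Submodule.isClosed_topologicalClosure _).inter (Submodule.isClosed_orthogonal _))

/-- The dual truncated Toeplitz operator `D_φ = P_{K_u^⊥} M_φ |_{K_u^⊥}` as an operator
on `K_u^⊥`. -/
def Dphi (Mu Mphi : L2 →L[ℂ] L2) : ((Ku Mu)ᗮ : Submodule ℂ L2) →L[ℂ] ((Ku Mu)ᗮ : Submodule ℂ L2) :=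
  (orthogonalProjection (Ku Mu)ᗮ).comp (Mphi.comp (Ku Mu)ᗮ.subtypeL)

/-- The composition `P_{K_u^⊥} ∘ M_φ`, viewed as a map of `L²` (agreeing with `D_φ` on
`K_u^⊥`). -/
def DP (Mu Mphi : L2 →L[ℂ] L2) (v : L2) : L2 :=
  ↑(orthogonalProjection (Ku Mu)ᗮ (Mphi v))

/-- An operator is norm attaining if some nonzero vector realizes its operator norm. -/
def NormAttaining {E F : Type*} [NormedAddCommGroup E] [NormedAddCommGroup F]
    [NormedSpace ℂ E] [NormedSpace ℂ F] (T : E →L[ℂ] F) : Prop :=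
  ∃ x, x ≠ 0 ∧ ‖T x‖ = ‖T‖ * ‖x‖

open scoped InnerProductSpace

/-!
Take `h₀ = u ψ₊`. Since `|u| = |ψ₊| = 1` a.e., `φ u h₀ = ū ψ̄₊ χ₊ u² ψ₊ = u χ₊`, which lies in
`uH² ⊆ K_uᗮ`, so `D_φ` fixes it; and multiplication by a unimodular function is an isometry of
`L²`, so `‖D_φ (u h₀)‖ = ‖u χ₊‖ = 1 = ‖u² ψ₊‖ = ‖u h₀‖`.
-/

lemma fourierLp_mem_H2 (n : ℕ) : fourierLp 2 (n : ℤ) ∈ H2 :=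
  le_topologicalClosure _ (subset_span ⟨n, rfl⟩)

lemma isClosed_H2 : IsClosed (H2 : Set L2) := isClosed_topologicalClosure _

lemma inner_fourierLp_eq_zero_of_mem_H2 {f : L2} (hf : f ∈ H2) {m : ℤ} (hm : m < 0) :
    ⟪(fourierLp 2 m : L2), f⟫_ℂ = 0 := by
  suffices H2 ≤ LinearMap.ker (innerSL ℂ (fourierLp 2 m : L2) : L2 →ₗ[ℂ] ℂ) from this hf
  refine topologicalClosure_minimal _ (span_le.mpr ?_) (innerSL ℂ _).isClosed_ker
  rintro _ ⟨n, rfl⟩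
  exact orthonormal_fourier.2 (by omega : m ≠ (n : ℤ))

lemma mem_H2_of_inner_fourierLp_eq_zero {f : L2}
    (hf : ∀ m : ℤ, m < 0 → ⟪(fourierLp 2 m : L2), f⟫_ℂ = 0) : f ∈ H2 := by
  refine isClosed_H2.mem_of_tendsto (fourierBasis.hasSum_repr f)
    (Filter.Eventually.of_forall fun s => H2.sum_mem fun i _ => ?_)
  rw [fourierBasis.repr_apply_apply, coe_fourierBasis]
  rcases lt_or_ge i 0 with hi | hi
  · rw [hf i hi, zero_smul]
    exact H2.zero_mem
  · lift i to ℕ using hi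
    exact H2.smul_mem _ (fourierLp_mem_H2 i)

namespace IsMul

variable {w v : 𝕋 → ℂ} {M N : L2 →L[ℂ] L2}

lemma comp (hM : IsMul w M) (hN : IsMul v N) : IsMul (w * v) (M.comp N) := fun f => by
  filter_upwards [hM (N f), hN f] with x hMx hNx
  simp only [ContinuousLinearMap.comp_apply, hMx, hNx, Pi.mul_apply, mul_assoc]

lemma coeFn_apply_toLp (hM : IsMul w M) {g : 𝕋 → ℂ} (hg : MemLp g 2 μ) :
    (M (hg.toLp g) : 𝕋 → ℂ) =ᵐ[μ] w * g := by
  filter_upwards [hM (hg.toLp g), hg.coeFn_toLp] with x hMx hgx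
  rw [hMx, hgx, Pi.mul_apply]

lemma norm_apply (hM : IsMul w M) (hw : ∀ᵐ x ∂μ, ‖w x‖ = 1) (f : L2) : ‖M f‖ = ‖f‖ := by
  rw [Lp.norm_def, Lp.norm_def, eLpNorm_congr_norm_ae (g := (f : 𝕋 → ℂ))]
  filter_upwards [hM f, hw] with x hMx hwx
  rw [hMx, norm_mul, hwx, one_mul]

/-- The Fourier coefficient of index `m` of `w e_n` is that of index `m - n` of `w`, so
multiplication by an `H²` symbol preserves `H²`. -/
lemma apply_mem_H2 (hM : IsMul w M) (hw : MemLp w 2 μ) (hwH : hw.toLp w ∈ H2) {f : L2}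
    (hf : f ∈ H2) : M f ∈ H2 := by
  have hfourier (n : ℕ) : M (fourierLp 2 (n : ℤ)) ∈ H2 := by
    refine mem_H2_of_inner_fourierLp_eq_zero fun m hm => ?_
    have hshift : ⟪(fourierLp 2 m : L2), M (fourierLp 2 (n : ℤ))⟫_ℂ
        = ⟪(fourierLp 2 (m - n) : L2), hw.toLp w⟫_ℂ := by
      rw [L2.inner_def, L2.inner_def]
      refine integral_congr_ae ?_
      filter_upwards [hM (fourierLp 2 (n : ℤ)), coeFn_fourierLp 2 (n : ℤ), coeFn_fourierLp 2 m,
        coeFn_fourierLp 2 (m - n), hw.coeFn_toLp] with x hMx hn hm' hmn hwx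
      simp only [RCLike.inner_apply, hMx, hn, hm', hmn, hwx]
      rw [← fourier_neg, ← fourier_neg, neg_sub, sub_eq_add_neg, fourier_add]
      ring
    rw [hshift]
    exact inner_fourierLp_eq_zero_of_mem_H2 hwH (by omega)
  suffices H2 ≤ H2.comap (M : L2 →ₗ[ℂ] L2) from this hf
  refine topologicalClosure_minimal _ (span_le.mpr ?_) (isClosed_H2.preimage M.continuous)
  rintro _ ⟨n, rfl⟩
  exact hfourier n

end IsMul

lemma norm_toLp_eq_one {α : Type*} [MeasurableSpace α] {ν : Measure α} [IsProbabilityMeasure ν]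
    {p : ENNReal} (hp : p ≠ 0) {w : α → ℂ} (hw : MemLp w p ν) (hw1 : ∀ᵐ x ∂ν, ‖w x‖ = 1) :
    ‖hw.toLp w‖ = 1 := by
  rw [Lp.norm_toLp, eLpNorm_congr_norm_ae (f := w) (g := fun _ => (1 : ℂ)) (by simpa using hw1),
    eLpNorm_const _ hp (IsProbabilityMeasure.ne_zero ν)]
  simp

lemma uH2_le_orthogonal_Ku (Mu : L2 →L[ℂ] L2) : uH2 Mu ≤ (Ku Mu)ᗮ :=
  (le_orthogonal_orthogonal _).trans (orthogonal_le inf_le_right)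

lemma DP_eq_self_of_mem_uH2 {Mu Mφ : L2 →L[ℂ] L2} {f : L2} (hf : Mφ f ∈ uH2 Mu) :
    DP Mu Mφ f = Mφ f :=
  starProjection_eq_self_iff.mpr (uH2_le_orthogonal_Ku Mu hf)

lemma star_mul_star_mul_mul_eq_of_norm_eq_one {u ψ χ : ℂ} (hu : ‖u‖ = 1) (hψ : ‖ψ‖ = 1) :
    star u * star ψ * χ * (u * u) * ψ = u * χ := by
  have hu' : star u * u = 1 := by rw [Complex.star_def, Complex.conj_mul', hu]; norm_num
  have hψ' : star ψ * ψ = 1 := by rw [Complex.star_def, Complex.conj_mul', hψ]; norm_num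
  linear_combination (u * χ * star ψ * ψ) * hu' + u * χ * hψ'

theorem stmt15_general (u φ : 𝕋 → ℂ) (hu : IsInner u)
    (Mu Mφ : L2 →L[ℂ] L2) (hMu : IsMul u Mu) (hMφ : IsMul φ Mφ)
    (ψ χ : 𝕋 → ℂ) (hψ : IsInner ψ) (hχ : IsInner χ)
    (hfact : φ =ᵐ[μ] fun x => star (u x) * star (ψ x) * χ x) :
    ∃ h₀ : L2, h₀ ∈ H2 ∧ Mu h₀ ≠ 0 ∧
      ‖DP Mu Mφ (Mu h₀)‖ = ‖Mu h₀‖ ∧ Mφ (Mu h₀) ∈ H2 := by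
  obtain ⟨hu2, huH, hu1⟩ := hu
  obtain ⟨hψ2, hψH, hψ1⟩ := hψ
  obtain ⟨hχ2, hχH, hχ1⟩ := hχ
  have hφuuψ : Mφ (Mu (Mu (hψ2.toLp ψ))) = Mu (hχ2.toLp χ) := by
    refine Lp.ext ?_
    filter_upwards [(hMφ.comp (hMu.comp hMu)).coeFn_apply_toLp hψ2, hMu.coeFn_apply_toLp hχ2,
      hfact, hu1, hψ1] with x hl hr hφx hux hψx
    simp only [ContinuousLinearMap.comp_apply, Pi.mul_apply] at hl hr
    rw [hl, hr, hφx, star_mul_star_mul_mul_eq_of_norm_eq_one hux hψx]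
  have hnorm : ‖Mu (Mu (hψ2.toLp ψ))‖ = ‖Mu (hχ2.toLp χ)‖ := by
    rw [hMu.norm_apply hu1, hMu.norm_apply hu1, hMu.norm_apply hu1, norm_toLp_eq_one two_ne_zero hψ2 hψ1,
      norm_toLp_eq_one two_ne_zero hχ2 hχ1]
  have huχ : Mu (hχ2.toLp χ) ∈ uH2 Mu := ⟨_, hχH, rfl⟩
  refine ⟨Mu (hψ2.toLp ψ), hMu.apply_mem_H2 hu2 huH hψH, ?_, ?_, ?_⟩
  · rw [← norm_ne_zero_iff, hnorm, hMu.norm_apply hu1, norm_toLp_eq_one two_ne_zero hχ2 hχ1]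
    exact one_ne_zero
  · rw [DP_eq_self_of_mem_uH2 (hφuuψ ▸ huχ), hφuuψ, hnorm]
  · rw [hφuuψ]
    exact hMu.apply_mem_H2 hu2 huH hχH

/-- If `φ = ū ψ̄₊ χ₊` for inner `ψ₊, χ₊`, then `D_φ` attains its norm at a nonzero
analytic vector `u h₀` with `φ u h₀ ∈ H²`. -/
theorem stmt15 (u φ : 𝕋 → ℂ) (hu : IsInner u) (hnc : Nonconst u)
    (Mu Mφ : L2 →L[ℂ] L2) (hMu : IsMul u Mu) (hMφ : IsMul φ Mφ)
    (hφ : eLpNorm φ ⊤ μ = 1)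
    (ψ χ : 𝕋 → ℂ) (hψ : IsInner ψ) (hχ : IsInner χ)
    (hfact : φ =ᵐ[μ] fun x => star (u x) * star (ψ x) * χ x) :
    ∃ h₀ : L2, h₀ ∈ H2 ∧ Mu h₀ ≠ 0 ∧
      ‖DP Mu Mφ (Mu h₀)‖ = ‖Mu h₀‖ ∧ Mφ (Mu h₀) ∈ H2 :=
  stmt15_general u φ hu Mu Mφ hMu hMφ ψ χ hψ hχ hfact
end DTTO
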